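/- Let M ≥ 1, let σ_{ji} be permutations of {1,…,M} for each pair (j,i) with h_{ji} = 1, let H̃ be the associated M-lift of H, and let c̃ ∈ F₂^{nM} satisfy H̃c̃ᵀ = 0 over F₂. Define p_i = #{k : c̃_{(i,k)} = 1} for each i. Then the normalized pseudo-codeword ω = (1/M)·(p₁,…,p_n) lies in the fundamental cone K(H). -/

import Mathlib

open Finset

/-- The fundamental cone of a 0-1 matrix `H` (entries in `ZMod 2`, read as reals via `.val`). -/
def InFundCone {R I : Type*} [Fintype I] [DecidableEq I] (H : Matrix R I (ZMod 2)) (ν : I → ℝ) : Prop :=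
  (∀ i, 0 ≤ ν i) ∧
  ∀ (j : R) (i : I), ((H j i).val : ℝ) * ν i ≤ ∑ i' ∈ Finset.univ.erase i, ((H j i').val : ℝ) * ν i'

/-- The `M`-lift of `H` determined by permutations `σ j i`. -/
def matLift {R I : Type*} (H : Matrix R I (ZMod 2)) {M : ℕ} (σ : R → I → Equiv.Perm (Fin M)) :
    Matrix (R × Fin M) (I × Fin M) (ZMod 2) :=
  fun jl ik => if H jl.1 ik.1 = 1 ∧ σ jl.1 ik.1 jl.2 = ik.2 then 1 else 0

/-- `p` is an unscaled pseudo-codeword of `H`. -/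
def IsUnscaledPseudoCodeword {R I : Type*} [Fintype R] [Fintype I]
    (H : Matrix R I (ZMod 2)) (p : I → ℕ) : Prop :=
  ∃ M : ℕ, 0 < M ∧ ∃ (σ : R → I → Equiv.Perm (Fin M)) (c : I × Fin M → ZMod 2),
    (matLift H σ).mulVec c = 0 ∧
    ∀ i, p i = (Finset.univ.filter (fun k : Fin M => c (i, k) = 1)).card

/-- The Tanner graph of `H`: bit nodes = columns, check nodes = rows. -/
def TannerGraph {R I : Type*} (H : Matrix R I (ZMod 2)) : SimpleGraph (I ⊕ R) where
  Adj v w := match v, w with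
    | Sum.inl i, Sum.inr j => H j i = 1
    | Sum.inr j, Sum.inl i => H j i = 1
    | _, _ => False
  symm := ⟨by rintro (i | j) (i' | j') h <;> simp_all⟩
  loopless := ⟨by rintro (i | j) h <;> simp_all⟩

/-- `π : W → V` realizes `G'` as an `M`-cover of `G`. -/
def IsMCover {V W : Type*} (G : SimpleGraph V) (G' : SimpleGraph W) (π : W → V) (M : ℕ) : Prop :=
  Function.Surjective π ∧
  (∀ a b, G'.Adj a b → G.Adj (π a) (π b)) ∧
  (∀ v : V, Nat.card (π ⁻¹' {v}) = M) ∧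
  (∀ w : W, Set.BijOn π (G'.neighborSet w) (G.neighborSet (π w)))

/-!
Fix a check `j` and a variable `i` with `h_{ji} = 1`. For every copy `l` of check `j` in the lift,
the bits of `c̃` it sees have even parity, so if the bit it sees in fibre `i` is `1`, one of the
bits it sees in the other fibres `i' ≠ i` with `h_{ji'} = 1` is `1` as well. The bit seen in
fibre `i'` is `c̃_{(i', σ_{ji'}(l))}`, which runs once through the whole fibre as `l` does, so
summing over `l` gives `p_i ≤ ∑_{i' ≠ i} h_{ji'} p_{i'}`; dividing by `M` preserves this.
-/

namespace ZMod

theorem val_mul_two (a b : ZMod 2) : (a * b).val = a.val * b.val := by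
  fin_cases a <;> fin_cases b <;> rfl

theorem val_le_sum_erase_val_of_sum_eq_zero {ι : Type*} [DecidableEq ι] {s : Finset ι}
    {f : ι → ZMod 2} (hf : ∑ i ∈ s, f i = 0) {i : ι} (hi : i ∈ s) :
    (f i).val ≤ ∑ i' ∈ s.erase i, (f i').val := by
  rcases (by decide : ∀ x : ZMod 2, x = 0 ∨ x = 1) (f i) with h0 | h1
  · simp [h0]
  have hrest : ∑ i' ∈ s.erase i, f i' ≠ 0 := by
    rw [← add_sum_erase s f hi, h1] at hf
    intro h
    simp [h] at hf
  obtain ⟨i', hi', hne⟩ := exists_ne_zero_of_sum_ne_zero hrest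
  calc (f i).val = 1 := by rw [h1, val_one]
    _ ≤ (f i').val := Nat.one_le_iff_ne_zero.2 ((val_ne_zero _).2 hne)
    _ ≤ ∑ i' ∈ s.erase i, (f i').val := single_le_sum (f := fun i' => (f i').val) (fun _ _ => Nat.zero_le _) hi'

theorem card_filter_eq_one_eq_sum_val {ι : Type*} [Fintype ι] (x : ι → ZMod 2) :
    #{k | x k = 1} = ∑ k, (x k).val := by
  rw [card_filter]
  refine sum_congr rfl fun k _ => ?_
  rcases (by decide : ∀ x : ZMod 2, x = 0 ∨ x = 1) (x k) with h | h <;> simp [h, ZMod.val_one]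

end ZMod

section Lift

variable {R I : Type*} {M : ℕ} (H : Matrix R I (ZMod 2)) (σ : R → I → Equiv.Perm (Fin M))

theorem matLift_mulVec_apply [Fintype I] (c : I × Fin M → ZMod 2) (j : R) (l : Fin M) :
    (matLift H σ).mulVec c (j, l) = ∑ i, H j i * c (i, σ j i l) := by
  simp only [Matrix.mulVec, dotProduct, matLift, Fintype.sum_prod_type]
  refine sum_congr rfl fun i _ => ?_
  rcases (by decide : ∀ x : ZMod 2, x = 0 ∨ x = 1) (H j i) with h | h <;> simp [h, eq_comm]

/-- The paper's `p_i`, counting the ones of `c` in the fibre over `i`. -/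
def fiberWeight (c : I × Fin M → ZMod 2) (i : I) : ℕ :=
  ∑ k, (c (i, k)).val

theorem val_mul_fiberWeight_le_of_matLift_mulVec_eq_zero [Fintype I] [DecidableEq I]
    {c : I × Fin M → ZMod 2} (hc : (matLift H σ).mulVec c = 0) (j : R) (i : I) :
    (H j i).val * fiberWeight c i ≤ ∑ i' ∈ univ.erase i, (H j i').val * fiberWeight c i' := by
  have hrow (i' : I) : (H j i').val * fiberWeight c i' = ∑ l, (H j i' * c (i', σ j i' l)).val := by
    simp only [fiberWeight, ZMod.val_mul_two, ← mul_sum]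
    rw [Equiv.sum_comp (σ j i') fun k => (c (i', k)).val]
  have hcheck (l : Fin M) : ∑ i', H j i' * c (i', σ j i' l) = 0 := by
    rw [← matLift_mulVec_apply, hc, Pi.zero_apply]
  calc (H j i).val * fiberWeight c i = ∑ l, (H j i * c (i, σ j i l)).val := hrow i
    _ ≤ ∑ l, ∑ i' ∈ univ.erase i, (H j i' * c (i', σ j i' l)).val :=
        sum_le_sum fun l _ => ZMod.val_le_sum_erase_val_of_sum_eq_zero (hcheck l) (mem_univ i)
    _ = ∑ i' ∈ univ.erase i, (H j i').val * fiberWeight c i' := by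
        rw [sum_comm]
        exact sum_congr rfl fun i' _ => (hrow i').symm

end Lift

theorem stmt5_general {r n M : ℕ} (H : Matrix (Fin r) (Fin n) (ZMod 2))
    (σ : Fin r → Fin n → Equiv.Perm (Fin M)) (c : Fin n × Fin M → ZMod 2)
    (hc : (matLift H σ).mulVec c = 0) (p : Fin n → ℕ)
    (hp : ∀ i, p i = (Finset.univ.filter (fun k : Fin M => c (i, k) = 1)).card) :
    InFundCone H (fun i => (p i : ℝ) / M) := by
  have hpw : p = fiberWeight c := funext fun i => by
    rw [hp, ZMod.card_filter_eq_one_eq_sum_val, fiberWeight]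
  refine ⟨fun i => by positivity, fun j i => ?_⟩
  have hle := val_mul_fiberWeight_le_of_matLift_mulVec_eq_zero H σ hc j i
  rw [← hpw] at hle
  simp only [mul_div_assoc', ← sum_div]
  gcongr
  exact_mod_cast hle

/-- every normalized pseudo-codeword lies in the fundamental cone. -/
theorem stmt5 {r n M : ℕ} (hM : 0 < M) (H : Matrix (Fin r) (Fin n) (ZMod 2))
    (σ : Fin r → Fin n → Equiv.Perm (Fin M)) (c : Fin n × Fin M → ZMod 2)
    (hc : (matLift H σ).mulVec c = 0) (p : Fin n → ℕ)
    (hp : ∀ i, p i = (Finset.univ.filter (fun k : Fin M => c (i, k) = 1)).card) :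
    InFundCone H (fun i => (p i : ℝ) / M) :=
  stmt5_general H σ c hc p hp
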